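/- Let R, C be positive integers, S > 0 a real number, and Υ ≥ 1. Suppose S/(RC) ≤ p_{ij} ≤ Υ·S/(RC) for all 1 ≤ i ≤ R, 1 ≤ j ≤ C. Then the matrix M'_1 satisfies ‖M'_1‖₂ ≤ √( 1 − 1/Υ³ + (Υ−1)² ). -/

import Mathlib

/-!
Put `z = D̄₂^{-1/2} x` and let `w = D̄₁^{-1} Z̄ z` be its row averages. Then
`M'₁ x = D̄₁^{1/2} (w − w̄ 1_R)` with `w̄` the uniform mean of `w`, so
`‖M'₁ x‖² = Σ N̄_{i·} (w_i − w̄)²`, while `‖x‖² = Σ N̄_{·j} z_j²`. Splitting at the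
`N̄_{i·}`-weighted mean `m` of `w` (which is the `N̄_{·j}`-weighted mean of `z`) gives
`Σ N̄_{i·} (w_i − m)² + N (m − w̄)²`, where `N = Σ p_{ij}`.

Written as sums of squared differences over pairs, both variances are compared through the entry
bounds, which give `Σ_i p_{ij} p_{il} / N̄_{i·} ≥ N̄_{·j} N̄_{·l} / (Υ³ N)` for all columns `j, l`:
row averaging contracts the variance, and the first term is at most `(1 − 1/Υ³) Σ N̄_{·j} z_j²`.
For the second, `m − w̄ = Σ (N̄_{i·}/N − 1/R) (w_i − m)`, and Cauchy–Schwarz together with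
`|R N̄_{i·} − N| ≤ (Υ − 1) S` bounds it by `(Υ − 1)²` times the first term.
-/

namespace CollapsedGibbs

/-- The matrix
`M'₁ = (I_R − (1/R) D̄₁^{1/2} 1_R 1_Rᵀ D̄₁^{−1/2}) D̄₁^{−1/2} Z̄ D̄₂^{−1/2}`
built from a nonnegative matrix `Z̄ = (p_{ij})` with row sums `N̄_{i·}` and column
sums `N̄_{·j}`. -/
noncomputable def Mprime1 {R C : ℕ} (p : Fin R → Fin C → ℝ) : Matrix (Fin R) (Fin C) ℝ :=
  let Nrow : Fin R → ℝ := fun i => ∑ j, p i j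
  let Ncol : Fin C → ℝ := fun j => ∑ i, p i j
  ((1 : Matrix (Fin R) (Fin R) ℝ) -
      (R : ℝ)⁻¹ • (Matrix.diagonal (fun i => Real.sqrt (Nrow i))
        * Matrix.of (fun (_ _ : Fin R) => (1 : ℝ))
        * Matrix.diagonal (fun i => (Real.sqrt (Nrow i))⁻¹)))
    * Matrix.diagonal (fun i => (Real.sqrt (Nrow i))⁻¹)
    * Matrix.of p
    * Matrix.diagonal (fun j => (Real.sqrt (Ncol j))⁻¹)

/-- The ℓ²→ℓ² operator (spectral) norm of a real matrix. -/
noncomputable def l2OpNorm {m n : ℕ} (A : Matrix (Fin m) (Fin n) ℝ) : ℝ :=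
  ‖LinearMap.toContinuousLinearMap (Matrix.toEuclideanLin A)‖

open Finset Matrix

section Variance

variable {ι : Type*} [Fintype ι] {α : Type*} [CommRing α]

theorem sum_sum_mul_mul_sub_sq (w g : ι → α) :
    ∑ i, ∑ k, w i * w k * (g i - g k) ^ 2
      = 2 * ((∑ i, w i) * ∑ i, w i * g i ^ 2) - 2 * (∑ i, w i * g i) ^ 2 := by
  have expand : ∀ i k, w i * w k * (g i - g k) ^ 2
      = w i * g i ^ 2 * w k + w i * (w k * g k ^ 2) - w i * g i * (2 * (w k * g k)) := by
    intros; ring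
  simp_rw [expand, sum_sub_distrib, sum_add_distrib, ← mul_sum, ← sum_mul]
  ring

theorem sum_mul_sub_sq_eq (a w : ι → α) {m : α} (hm : ∑ i, a i * w i = (∑ i, a i) * m)
    (c : α) :
    ∑ i, a i * (w i - c) ^ 2 = ∑ i, a i * (w i - m) ^ 2 + (∑ i, a i) * (m - c) ^ 2 := by
  have expand : ∀ i, a i * (w i - c) ^ 2
      = a i * (w i - m) ^ 2 + 2 * (m - c) * (a i * w i) + a i * (c ^ 2 - m ^ 2) := by
    intro i; ring
  rw [sum_congr rfl fun i _ => expand i, sum_add_distrib, sum_add_distrib, ← mul_sum, ← sum_mul,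
    hm]
  ring

end Variance

theorem sq_sum_mul_le_sum_sq_div_mul_sum_mul_sq {ι : Type*} [Fintype ι] {N : ι → ℝ}
    (hN : ∀ i, 0 < N i) (c u : ι → ℝ) :
    (∑ i, c i * u i) ^ 2 ≤ (∑ i, c i ^ 2 / N i) * ∑ i, N i * u i ^ 2 := by
  refine sum_sq_le_sum_mul_sum_of_sq_le_mul _ (fun i _ => ?_) (fun i _ => ?_) (fun i _ => ?_)
  · exact div_nonneg (sq_nonneg _) (hN i).le
  · exact mul_nonneg (hN i).le (sq_nonneg _)
  · field_simp [(hN i).ne']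
    rfl

theorem mul_div_sub_inv_sq_div_le {R a Υ N T : ℝ} (hR : 0 < R) (ha : 0 < a)
    (hN₁ : a ≤ N) (hN₂ : N ≤ Υ * a) (hT₁ : R * a ≤ T) (hT₂ : T ≤ R * (Υ * a)) :
    T * (N / T - R⁻¹) ^ 2 / N ≤ (Υ - 1) ^ 2 / R := by
  have hN : 0 < N := ha.trans_le hN₁
  have hT : 0 < T := (mul_pos hR ha).trans_le hT₁
  have hdiff : (R * N - T) ^ 2 ≤ (R * (Υ - 1) * a) ^ 2 := by
    apply sq_le_sq' <;> nlinarith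
  have hprod : R * a * a ≤ T * N := mul_le_mul hT₁ hN₁ ha.le hT.le
  have hexpand : T * (N / T - R⁻¹) ^ 2 / N = (R * N - T) ^ 2 / (R ^ 2 * T * N) := by
    field_simp
  rw [hexpand, div_le_div_iff₀ (by positivity) hR]
  nlinarith [mul_le_mul_of_nonneg_left hprod (mul_nonneg (sq_nonneg (Υ - 1)) hR.le)]

theorem sum_mul_sq_sub_mean_le {ι : Type*} [Fintype ι] {N : ι → ℝ} {a Υ : ℝ} (ha : 0 < a)
    (hN₁ : ∀ i, a ≤ N i) (hN₂ : ∀ i, N i ≤ Υ * a) (w : ι → ℝ) {m : ℝ}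
    (hm : ∑ i, N i * w i = (∑ i, N i) * m) :
    (∑ i, N i) * (m - (Fintype.card ι : ℝ)⁻¹ * ∑ i, w i) ^ 2
      ≤ (Υ - 1) ^ 2 * ∑ i, N i * (w i - m) ^ 2 := by
  rcases isEmpty_or_nonempty ι with hι | hι
  · simp
  set R : ℝ := (Fintype.card ι : ℝ)
  set T := ∑ i, N i
  have hR : 0 < R := by simp [R, Fintype.card_pos]
  have hT₁ : R * a ≤ T := by simpa [R] using card_nsmul_le_sum univ N a fun i _ => hN₁ i
  have hT₂ : T ≤ R * (Υ * a) := by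
    simpa [R] using sum_le_card_nsmul univ N (Υ * a) fun i _ => hN₂ i
  have hT : 0 < T := (mul_pos hR ha).trans_le hT₁
  set c : ι → ℝ := fun i => N i / T - R⁻¹
  have hNpos : ∀ i, 0 < N i := fun i => ha.trans_le (hN₁ i)
  have hsum_c : ∑ i, c i = 0 := by
    simp only [c, sum_sub_distrib, ← sum_div, sum_const, card_univ, nsmul_eq_mul]
    rw [div_self hT.ne', mul_inv_cancel₀ hR.ne', sub_self]
  have hcw : ∑ i, c i * w i = m - R⁻¹ * ∑ i, w i := by
    simp only [c, sub_mul, sum_sub_distrib, div_mul_eq_mul_div, ← sum_div, hm, ← mul_sum]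
    field_simp
  have hgap : m - R⁻¹ * ∑ i, w i = ∑ i, c i * (w i - m) := by
    simp only [mul_sub, sum_sub_distrib, ← sum_mul, hsum_c, hcw, zero_mul, sub_zero]
  have hcs := sq_sum_mul_le_sum_sq_div_mul_sum_mul_sq hNpos c (fun i => w i - m)
  have hc : T * ∑ i, c i ^ 2 / N i ≤ (Υ - 1) ^ 2 := calc
    T * ∑ i, c i ^ 2 / N i ≤ ∑ _i : ι, (Υ - 1) ^ 2 / R := by
      rw [mul_sum]
      refine sum_le_sum fun i _ => ?_
      rw [← mul_div_assoc]
      exact mul_div_sub_inv_sq_div_le hR ha (hN₁ i) (hN₂ i) hT₁ hT₂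
    _ = (Υ - 1) ^ 2 := by
      rw [sum_const, card_univ, nsmul_eq_mul]
      show R * _ = _
      field_simp
  calc T * (m - R⁻¹ * ∑ i, w i) ^ 2
      ≤ T * ((∑ i, c i ^ 2 / N i) * ∑ i, N i * (w i - m) ^ 2) := by
        rw [hgap]; exact mul_le_mul_of_nonneg_left hcs hT.le
    _ ≤ (Υ - 1) ^ 2 * ∑ i, N i * (w i - m) ^ 2 := by
        rw [← mul_assoc]
        exact mul_le_mul_of_nonneg_right hc
          (sum_nonneg fun i _ => mul_nonneg (hNpos i).le (sq_nonneg _))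

section RowAverages

variable {ι κ : Type*} [Fintype κ] (p : ι → κ → ℝ)

def rowSum (i : ι) : ℝ := ∑ j, p i j

noncomputable def rowAvg (z : κ → ℝ) (i : ι) : ℝ := (∑ j, p i j * z j) / rowSum p i

variable {p}

theorem rowSum_mul_rowAvg {i : ι} (hi : rowSum p i ≠ 0) (z : κ → ℝ) :
    rowSum p i * rowAvg p z i = ∑ j, p i j * z j :=
  mul_div_cancel₀ _ hi

theorem rowAvg_sub_const {i : ι} (hi : rowSum p i ≠ 0) (z : κ → ℝ) (c : ℝ) :
    rowAvg p (fun j => z j - c) i = rowAvg p z i - c := by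
  simp only [rowAvg, mul_sub, sum_sub_distrib, ← sum_mul]
  rw [sub_div, ← rowSum, mul_div_cancel_left₀ _ hi]

theorem rowSum_mul_rowAvg_sq {i : ι} (hi : rowSum p i ≠ 0) (z : κ → ℝ) :
    rowSum p i * rowAvg p z i ^ 2
      = ∑ j, p i j * z j ^ 2
        - (2 * rowSum p i)⁻¹ * ∑ j, ∑ l, p i j * p i l * (z j - z l) ^ 2 := by
  rw [sum_sum_mul_mul_sub_sq, ← rowSum, ← rowSum_mul_rowAvg hi z]
  field_simp
  ring

variable (p) [Fintype ι]

def colSum (j : κ) : ℝ := ∑ i, p i j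

def totalSum : ℝ := ∑ i, ∑ j, p i j

theorem sum_colSum : ∑ j, colSum p j = totalSum p := sum_comm

variable {p}

theorem sum_rowSum_mul_rowAvg (hrow : ∀ i, rowSum p i ≠ 0) (z : κ → ℝ) :
    ∑ i, rowSum p i * rowAvg p z i = ∑ j, colSum p j * z j := by
  simp only [rowSum_mul_rowAvg (hrow _), colSum, sum_mul]
  exact sum_comm

/-- Both sides are sums over pairs of columns of `(z j - z l) ^ 2` (the right one because `z` is
centred), and `hδ` compares their coefficients. -/
theorem sum_rowSum_mul_rowAvg_sq_le (hrow : ∀ i, rowSum p i ≠ 0) (hT : 0 < totalSum p)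
    {δ : ℝ}
    (hδ : ∀ j l, δ * (colSum p j * colSum p l) ≤ totalSum p * ∑ i, p i j * p i l / rowSum p i)
    {z : κ → ℝ} (hz : ∑ j, colSum p j * z j = 0) :
    ∑ i, rowSum p i * rowAvg p z i ^ 2 ≤ (1 - δ) * ∑ j, colSum p j * z j ^ 2 := by
  set X := ∑ j, colSum p j * z j ^ 2
  set E := ∑ j, ∑ l, (∑ i, p i j * p i l / rowSum p i) * (z j - z l) ^ 2
  have hrows : ∑ i, rowSum p i * rowAvg p z i ^ 2 = X - E / 2 := by
    rw [sum_congr rfl fun i _ => rowSum_mul_rowAvg_sq (hrow i) z, sum_sub_distrib]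
    congr 1
    · rw [sum_comm]
      simp only [X, colSum, sum_mul]
    · simp only [E, mul_sum, sum_mul, sum_div]
      rw [sum_comm]
      refine sum_congr rfl fun j _ => ?_
      rw [sum_comm]
      refine sum_congr rfl fun l _ => sum_congr rfl fun i _ => ?_
      field_simp
  have hcentered : ∑ j, ∑ l, colSum p j * colSum p l * (z j - z l) ^ 2 = 2 * totalSum p * X := by
    rw [sum_sum_mul_mul_sub_sq, hz, sum_colSum]
    ring
  have hgap : totalSum p * (δ * X) ≤ totalSum p * (E / 2) := calc
    totalSum p * (δ * X)
        = δ * (∑ j, ∑ l, colSum p j * colSum p l * (z j - z l) ^ 2) / 2 := by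
      rw [hcentered]; ring
    _ = (∑ j, ∑ l, δ * (colSum p j * colSum p l) * (z j - z l) ^ 2) / 2 := by
      simp only [mul_sum, mul_assoc]
    _ ≤ (∑ j, ∑ l, totalSum p * (∑ i, p i j * p i l / rowSum p i) * (z j - z l) ^ 2) / 2 := by
      gcongr ?_ / 2
      exact sum_le_sum fun j _ => sum_le_sum fun l _ =>
        mul_le_mul_of_nonneg_right (hδ j l) (sq_nonneg _)
    _ = totalSum p * (E / 2) := by
      rw [mul_div_assoc', mul_sum]
      refine congrArg (· / 2) (sum_congr rfl fun j _ => ?_)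
      rw [mul_sum]
      exact sum_congr rfl fun l _ => mul_assoc _ _ _
  have hδX : δ * X ≤ E / 2 := le_of_mul_le_mul_left hgap hT
  rw [hrows]
  linarith

theorem sum_rowSum_mul_rowAvg_sub_sq_le (hrow : ∀ i, rowSum p i ≠ 0) (hT : 0 < totalSum p)
    {δ : ℝ} (hδ₁ : δ ≤ 1)
    (hδ : ∀ j l, δ * (colSum p j * colSum p l) ≤ totalSum p * ∑ i, p i j * p i l / rowSum p i)
    (hcol : ∀ j, 0 ≤ colSum p j) (z : κ → ℝ) {m : ℝ}
    (hm : ∑ j, colSum p j * z j = totalSum p * m) :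
    ∑ i, rowSum p i * (rowAvg p z i - m) ^ 2 ≤ (1 - δ) * ∑ j, colSum p j * z j ^ 2 := by
  have hcentered : ∑ j, colSum p j * (z j - m) = 0 := by
    simp only [mul_sub, sum_sub_distrib, ← sum_mul, hm, sum_colSum, sub_self]
  have hm' : ∑ j, colSum p j * z j = (∑ j, colSum p j) * m := by rw [hm, sum_colSum]
  have hshift : ∑ j, colSum p j * (z j - m) ^ 2 ≤ ∑ j, colSum p j * z j ^ 2 := by
    have h := sum_mul_sub_sq_eq (colSum p) z hm' 0
    simp only [sub_zero] at h
    rw [h]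
    exact le_add_of_nonneg_right (mul_nonneg (sum_nonneg fun j _ => hcol j) (sq_nonneg _))
  calc ∑ i, rowSum p i * (rowAvg p z i - m) ^ 2
      = ∑ i, rowSum p i * rowAvg p (fun j => z j - m) i ^ 2 := by
        simp only [rowAvg_sub_const (hrow _)]
    _ ≤ (1 - δ) * ∑ j, colSum p j * (z j - m) ^ 2 :=
        sum_rowSum_mul_rowAvg_sq_le hrow hT hδ hcentered
    _ ≤ (1 - δ) * ∑ j, colSum p j * z j ^ 2 :=
        mul_le_mul_of_nonneg_left hshift (sub_nonneg.mpr hδ₁)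

theorem sum_sq_eq_sum_colSum_mul_sq (hcol : ∀ j, 0 < colSum p j) (x : κ → ℝ) :
    ∑ j, x j ^ 2 = ∑ j, colSum p j * ((√(colSum p j))⁻¹ * x j) ^ 2 := by
  refine sum_congr rfl fun j _ => ?_
  rw [mul_pow, inv_pow, Real.sq_sqrt (hcol j).le, ← mul_assoc, mul_inv_cancel₀ (hcol j).ne',
    one_mul]

end RowAverages

section EntryBounds

variable {ι κ : Type*} {p : ι → κ → ℝ} {s Υ : ℝ}

theorem rowSum_pos [Fintype κ] [Nonempty κ] (hs : 0 < s) (hp₁ : ∀ i j, s ≤ p i j) (i : ι) :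
    0 < rowSum p i :=
  sum_pos (fun j _ => hs.trans_le (hp₁ i j)) univ_nonempty

theorem colSum_pos [Fintype ι] [Nonempty ι] (hs : 0 < s) (hp₁ : ∀ i j, s ≤ p i j) (j : κ) :
    0 < colSum p j :=
  sum_pos (fun i _ => hs.trans_le (hp₁ i j)) univ_nonempty

theorem rowSum_mem_Icc [Fintype κ] (hp₁ : ∀ i j, s ≤ p i j) (hp₂ : ∀ i j, p i j ≤ Υ * s) (i : ι) :
    rowSum p i ∈ Set.Icc (Fintype.card κ * s) (Fintype.card κ * (Υ * s)) :=
  ⟨by simpa [rowSum] using card_nsmul_le_sum univ (p i) s fun j _ => hp₁ i j,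
    by simpa [rowSum] using sum_le_card_nsmul univ (p i) (Υ * s) fun j _ => hp₂ i j⟩

theorem colSum_mem_Icc [Fintype ι] (hp₁ : ∀ i j, s ≤ p i j) (hp₂ : ∀ i j, p i j ≤ Υ * s) (j : κ) :
    colSum p j ∈ Set.Icc (Fintype.card ι * s) (Fintype.card ι * (Υ * s)) :=
  ⟨by simpa [colSum] using card_nsmul_le_sum univ (p · j) s fun i _ => hp₁ i j,
    by simpa [colSum] using sum_le_card_nsmul univ (p · j) (Υ * s) fun i _ => hp₂ i j⟩

theorem totalSum_mem_Icc [Fintype ι] [Fintype κ] (hp₁ : ∀ i j, s ≤ p i j)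
    (hp₂ : ∀ i j, p i j ≤ Υ * s) :
    totalSum p ∈ Set.Icc (Fintype.card ι * (Fintype.card κ * s))
      (Fintype.card ι * (Fintype.card κ * (Υ * s))) :=
  ⟨show _ ≤ ∑ i, rowSum p i by
      simpa using card_nsmul_le_sum univ (rowSum p) _ fun i _ => (rowSum_mem_Icc hp₁ hp₂ i).1,
    show ∑ i, rowSum p i ≤ _ by
      simpa using sum_le_card_nsmul univ (rowSum p) _ fun i _ => (rowSum_mem_Icc hp₁ hp₂ i).2⟩

theorem one_div_pow_three_mul_colSum_mul_colSum_le [Fintype ι] [Fintype κ] (hs : 0 < s) (hΥ : 0 < Υ)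
    (hp₁ : ∀ i j, s ≤ p i j) (hp₂ : ∀ i j, p i j ≤ Υ * s) (j l : κ) :
    1 / Υ ^ 3 * (colSum p j * colSum p l) ≤ totalSum p * ∑ i, p i j * p i l / rowSum p i := by
  have hC : (0 : ℝ) < Fintype.card κ := by
    have : Nonempty κ := ⟨j⟩
    exact_mod_cast Fintype.card_pos
  obtain ⟨-, hj₂⟩ := colSum_mem_Icc hp₁ hp₂ j
  obtain ⟨hl₁, hl₂⟩ := colSum_mem_Icc hp₁ hp₂ l
  set R : ℝ := (Fintype.card ι : ℝ)
  set C : ℝ := (Fintype.card κ : ℝ)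
  have hR : 0 ≤ R := Nat.cast_nonneg _
  calc 1 / Υ ^ 3 * (colSum p j * colSum p l)
      ≤ 1 / Υ ^ 3 * ((R * (Υ * s)) * (R * (Υ * s))) := by
        gcongr
        exact (mul_nonneg hR hs.le).trans hl₁
    _ = (R * (C * s)) * (R * (s * s / (C * (Υ * s)))) := by
        field_simp
    _ ≤ totalSum p * ∑ i, p i j * p i l / rowSum p i := by
        have hterm : ∀ i, s * s / (C * (Υ * s)) ≤ p i j * p i l / rowSum p i := fun i => by
          obtain ⟨hi₁, hi₂⟩ := rowSum_mem_Icc hp₁ hp₂ i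
          exact div_le_div₀ (by nlinarith [hp₁ i j, hp₁ i l]) (mul_le_mul (hp₁ i j) (hp₁ i l)
            hs.le (hs.trans_le (hp₁ i j)).le) ((mul_pos hC hs).trans_le hi₁) hi₂
        have hsum : R * (s * s / (C * (Υ * s))) ≤ ∑ i, p i j * p i l / rowSum p i := by
          simpa using card_nsmul_le_sum univ _ _ fun i _ => hterm i
        have hT := (totalSum_mem_Icc hp₁ hp₂).1
        exact mul_le_mul hT hsum (by positivity) ((by positivity : 0 ≤ R * (C * s)).trans hT)

end EntryBounds

theorem sum_rowSum_mul_rowAvg_sub_avg_sq_le {ι κ : Type*} [Fintype ι] [Fintype κ] [Nonempty ι]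
    [Nonempty κ] {p : ι → κ → ℝ} {s Υ : ℝ} (hs : 0 < s) (hΥ : 1 ≤ Υ)
    (hp₁ : ∀ i j, s ≤ p i j) (hp₂ : ∀ i j, p i j ≤ Υ * s) (z : κ → ℝ) :
    ∑ i, rowSum p i * (rowAvg p z i - (Fintype.card ι : ℝ)⁻¹ * ∑ k, rowAvg p z k) ^ 2
      ≤ (1 - 1 / Υ ^ 3 + (Υ - 1) ^ 2) * ∑ j, colSum p j * z j ^ 2 := by
  have hC : (0 : ℝ) < Fintype.card κ := by exact_mod_cast Fintype.card_pos
  have hrow := rowSum_pos hs hp₁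
  have hcol := colSum_pos hs hp₁
  have hT : 0 < totalSum p := sum_pos (fun i _ => hrow i) univ_nonempty
  set m := (∑ j, colSum p j * z j) / totalSum p
  have hm : ∑ j, colSum p j * z j = totalSum p * m := (mul_div_cancel₀ _ hT.ne').symm
  have hm_row : ∑ i, rowSum p i * rowAvg p z i = (∑ i, rowSum p i) * m := by
    rw [sum_rowSum_mul_rowAvg (fun i => (hrow i).ne'), hm]
    rfl
  set A := ∑ i, rowSum p i * (rowAvg p z i - m) ^ 2
  set X := ∑ j, colSum p j * z j ^ 2
  have hδ₀ : 0 ≤ 1 / Υ ^ 3 := by positivity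
  have hδ₁ : 1 / Υ ^ 3 ≤ 1 := div_le_one_of_le₀ (one_le_pow₀ hΥ) (by positivity)
  have hA : A ≤ (1 - 1 / Υ ^ 3) * X :=
    sum_rowSum_mul_rowAvg_sub_sq_le (fun i => (hrow i).ne') hT hδ₁
      (one_div_pow_three_mul_colSum_mul_colSum_le hs (by linarith) hp₁ hp₂)
      (fun j => (hcol j).le) z hm
  have hB : (∑ i, rowSum p i) * (m - (Fintype.card ι : ℝ)⁻¹ * ∑ k, rowAvg p z k) ^ 2
      ≤ (Υ - 1) ^ 2 * A :=
    sum_mul_sq_sub_mean_le (mul_pos hC hs) (fun i => (rowSum_mem_Icc hp₁ hp₂ i).1)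
      (fun i => (rowSum_mem_Icc hp₁ hp₂ i).2.trans_eq (by ring)) _ hm_row
  have hA₀ : 0 ≤ A := sum_nonneg fun i _ => mul_nonneg (hrow i).le (sq_nonneg _)
  have hX₀ : 0 ≤ X := sum_nonneg fun j _ => mul_nonneg (hcol j).le (sq_nonneg _)
  rw [sum_mul_sub_sq_eq (rowSum p) (rowAvg p z) hm_row]
  nlinarith [mul_le_mul_of_nonneg_left hA (sq_nonneg (Υ - 1)),
    mul_nonneg (mul_nonneg (sq_nonneg (Υ - 1)) hδ₀) hX₀]

theorem l2OpNorm_le_sqrt_of_sum_sq_le {m n : ℕ} {A : Matrix (Fin m) (Fin n) ℝ} {K : ℝ}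
    (hK : 0 ≤ K) (h : ∀ x : Fin n → ℝ, ∑ i, (A *ᵥ x) i ^ 2 ≤ K * ∑ j, x j ^ 2) :
    l2OpNorm A ≤ √K := by
  refine ContinuousLinearMap.opNorm_le_bound _ (Real.sqrt_nonneg _) fun x => ?_
  rw [LinearMap.coe_toContinuousLinearMap', Matrix.toLpLin_apply, EuclideanSpace.norm_eq,
    EuclideanSpace.norm_eq, ← Real.sqrt_mul hK]
  simpa only [PiLp.toLp_apply, Real.norm_eq_abs, sq_abs] using Real.sqrt_le_sqrt (h x)

section Mprime1

variable {R C : ℕ} {p : Fin R → Fin C → ℝ}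

theorem Mprime1_mulVec (hrow : ∀ i, 0 < rowSum p i) (x : Fin C → ℝ) :
    Mprime1 p *ᵥ x = fun i => √(rowSum p i) * (rowAvg p (fun j => (√(colSum p j))⁻¹ * x j) i
      - (R : ℝ)⁻¹ * ∑ k, rowAvg p (fun j => (√(colSum p j))⁻¹ * x j) k) := by
  set z : Fin C → ℝ := fun j => (√(colSum p j))⁻¹ * x j
  set w : Fin R → ℝ := rowAvg p z
  have hz : (diagonal fun j => (√(colSum p j))⁻¹) *ᵥ x = z := by
    ext j; rw [mulVec_diagonal]
  have hy : (diagonal fun i => (√(rowSum p i))⁻¹) *ᵥ (of p *ᵥ z)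
      = fun i => √(rowSum p i) * w i := by
    ext i
    rw [mulVec_diagonal]
    simp only [mulVec, dotProduct, of_apply]
    rw [← rowSum_mul_rowAvg (hrow i).ne' z, ← mul_assoc, inv_mul_eq_div, Real.div_sqrt]
  have hw : (diagonal fun i => (√(rowSum p i))⁻¹) *ᵥ (fun i => √(rowSum p i) * w i) = w := by
    ext i
    rw [mulVec_diagonal, ← mul_assoc, inv_mul_cancel₀ (Real.sqrt_pos.2 (hrow i)).ne', one_mul]
  have hsum : (of fun _ _ => (1 : ℝ) : Matrix (Fin R) (Fin R) ℝ) *ᵥ w = fun _ => ∑ k, w k := by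
    ext i; simp [mulVec, dotProduct]
  ext i
  simp only [Mprime1, ← mulVec_mulVec, sub_mulVec, smul_mulVec, one_mulVec]
  simp only [rowSum, colSum] at hz hy hw ⊢
  rw [hz, hy, hw, hsum]
  simp only [Pi.sub_apply, Pi.smul_apply, mulVec_diagonal, smul_eq_mul]
  ring

theorem sum_Mprime1_mulVec_sq (hrow : ∀ i, 0 < rowSum p i) (x : Fin C → ℝ) :
    ∑ i, (Mprime1 p *ᵥ x) i ^ 2 = ∑ i, rowSum p i *
      (rowAvg p (fun j => (√(colSum p j))⁻¹ * x j) i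
        - (R : ℝ)⁻¹ * ∑ k, rowAvg p (fun j => (√(colSum p j))⁻¹ * x j) k) ^ 2 := by
  simp only [Mprime1_mulVec hrow, mul_pow, Real.sq_sqrt (hrow _).le]

end Mprime1

/-- **Spectral-norm bound for `M'₁` in the second regime.**  If
`S/(RC) ≤ p_{ij} ≤ Υ·S/(RC)`, then `‖M'₁‖₂ ≤ √(1 − 1/Υ³ + (Υ−1)²)`. -/
theorem Mprime1_l2OpNorm_le
    (R C : ℕ) (hR : 0 < R) (hC : 0 < C) (S : ℝ) (hS : 0 < S)
    (Υ : ℝ) (hΥ : 1 ≤ Υ)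
    (p : Fin R → Fin C → ℝ)
    (hp1 : ∀ i j, S / (R * C) ≤ p i j)
    (hp2 : ∀ i j, p i j ≤ Υ * S / (R * C)) :
    l2OpNorm (Mprime1 p) ≤ Real.sqrt (1 - 1 / Υ ^ 3 + (Υ - 1) ^ 2) := by
  have : NeZero R := ⟨hR.ne'⟩
  have : NeZero C := ⟨hC.ne'⟩
  set s := S / (R * C)
  have hs : 0 < s := by positivity
  have hp₂ : ∀ i j, p i j ≤ Υ * s := fun i j => (hp2 i j).trans_eq (mul_div_assoc _ _ _)
  have hδ : 1 / Υ ^ 3 ≤ 1 := div_le_one_of_le₀ (one_le_pow₀ hΥ) (by positivity)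
  refine l2OpNorm_le_sqrt_of_sum_sq_le (by nlinarith [sq_nonneg (Υ - 1)]) fun x => ?_
  rw [sum_Mprime1_mulVec_sq (rowSum_pos hs hp1), sum_sq_eq_sum_colSum_mul_sq (colSum_pos hs hp1)]
  simpa using sum_rowSum_mul_rowAvg_sub_avg_sq_le hs hΥ hp1 hp₂ _

end CollapsedGibbs
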